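/- Let N_n be the symmetric Nakayama algebra on the cyclic quiver with n vertices modulo paths of length n+1, let M ⊆ {1,…,n} with |M| = m, and let e = Σ_{i∈M} e_i. Then e N_n e ≅ N_m as algebras. -/

import Mathlib

/-- Paths of a quiver, bundled with their endpoints. -/
abbrev PathIdx (V : Type) [Quiver.{0} V] := Σ a b : V, Quiver.Path a b

/-- The path algebra `FQ`: the vector space with basis the paths of the quiver. -/
abbrev PathAlg (F : Type) [Field F] (V : Type) [Quiver.{0} V] := PathIdx V →₀ F

/-- Composition of composable bundled paths. -/
def pcomp {V : Type} [Quiver.{0} V] (p q : PathIdx V) (h : p.2.1 = q.1) : PathIdx V :=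
  ⟨p.1, q.2.1, p.2.2.comp (q.2.2.cast h.symm rfl)⟩

/-- Multiplication of the path algebra: composition of composable paths, `0` otherwise. -/
noncomputable def pmul {F : Type} [Field F] {V : Type} [Quiver.{0} V] [DecidableEq V]
    (x y : PathAlg F V) : PathAlg F V :=
  x.sum fun p cp => y.sum fun q cq =>
    if h : p.2.1 = q.1 then Finsupp.single (pcomp p q h) (cp * cq) else 0

/-- The unit of the path algebra: the sum of the trivial paths at the vertices. -/
noncomputable def pone (F : Type) [Field F] (V : Type) [Quiver.{0} V] [Fintype V] :
    PathAlg F V :=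
  ∑ a : V, Finsupp.single (⟨a, a, Quiver.Path.nil⟩ : PathIdx V) 1

/-- `π : FQ → Λ` presents the algebra `Λ` as the quotient of the path algebra of the
quiver by the two-sided ideal generated by the relation set `Rel`. -/
def IsPresentation {F : Type} [Field F] {V : Type} [Quiver.{0} V] [DecidableEq V] [Fintype V]
    {Λ : Type} [Ring Λ] [Algebra F Λ] (π : PathAlg F V → Λ) (Rel : Set (PathAlg F V)) :
    Prop :=
  (∀ x y, π (x + y) = π x + π y) ∧
  (∀ (c : F) (x), π (c • x) = c • π x) ∧
  (∀ x y, π (pmul x y) = π x * π y) ∧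
  π (pone F V) = 1 ∧
  Function.Surjective π ∧
  ∀ x, π x = 0 ↔ x ∈ Submodule.span F {y | ∃ a b, ∃ r ∈ Rel, y = pmul a (pmul r b)}
/-- The cyclic quiver on `n` vertices: one arrow `a → a + 1` for each vertex. -/
def CycV (n : ℕ) : Type := Fin n

/-- View a vertex of the cyclic quiver as an element of `Fin n`. -/
def CycV.t {n : ℕ} (a : CycV n) : Fin n := a

/-- View an element of `Fin n` as a vertex of the cyclic quiver. -/
def CycV.of {n : ℕ} (a : Fin n) : CycV n := a

instance (n : ℕ) [NeZero n] : Quiver.{0} (CycV n) :=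
  ⟨fun a b => PLift (b.t = a.t + 1)⟩

instance (n : ℕ) : DecidableEq (CycV n) := inferInstanceAs (DecidableEq (Fin n))
instance (n : ℕ) : Fintype (CycV n) := inferInstanceAs (Fintype (Fin n))

/-- The relations of the Nakayama algebra `N_n`: all paths of length `n+1`. -/
def RelCyc (F : Type) [Field F] (n : ℕ) [NeZero n] : Set (PathAlg F (CycV n)) :=
  {x | ∃ p : PathIdx (CycV n), p.2.2.length = n + 1 ∧ x = Finsupp.single p 1}

/-!
The corner `e N_n e` is spanned by the classes of the paths with both endpoints in `M`, and such a
class vanishes exactly when the path is longer than `n`. Send the path of length `l` from `i` to the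
path of the cyclic quiver on `|M|` vertices that starts at the position of `i` in `M` and whose
length is the number of points of `M` in `[i, i + l)`. On paths between points of `M` this map is
injective and onto all paths, it preserves composability and composition, and it sends the paths
longer than `n` exactly to the paths longer than `|M|`; so it induces an algebra isomorphism
`e N_n e ≅ N_{|M|}`.
-/

open Fin.NatCast Fin.CommRing

section PathAlgebra

variable {F : Type} [Field F] {V : Type} [Quiver.{0} V]

lemma pcomp_length (p q : PathIdx V) (h : p.2.1 = q.1) :
    (pcomp p q h).2.2.length = p.2.2.length + q.2.2.length := by
  obtain ⟨a, b, p⟩ := p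
  obtain ⟨c, d, q⟩ := q
  dsimp only at h
  subst h
  simp [pcomp]

lemma nil_pcomp {v : V} (p : PathIdx V) (h : v = p.1) : pcomp ⟨v, v, .nil⟩ p h = p := by
  obtain ⟨a, b, q⟩ := p
  dsimp only at h
  subst h
  simp [pcomp]

lemma pcomp_nil {v : V} (p : PathIdx V) (h : p.2.1 = v) : pcomp p ⟨v, v, .nil⟩ h = p := by
  obtain ⟨a, b, q⟩ := p
  dsimp only at h
  subst h
  simp [pcomp]

variable [DecidableEq V]

lemma pmul_single_single (p q : PathIdx V) (c d : F) :
    pmul (Finsupp.single p c) (Finsupp.single q d) =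
      if h : p.2.1 = q.1 then Finsupp.single (pcomp p q h) (c * d) else 0 := by
  simp [pmul]

noncomputable def pmulBilin : PathAlg F V →ₗ[F] PathAlg F V →ₗ[F] PathAlg F V :=
  LinearMap.mk₂ F pmul
    (fun x y z => by
      unfold pmul
      rw [Finsupp.sum_add_index' (fun p => by simp)]
      intro p c₁ c₂
      rw [← Finsupp.sum_add]
      refine Finsupp.sum_congr fun q _ => ?_
      split_ifs <;> simp [add_mul])
    (fun c x y => by
      unfold pmul
      rw [Finsupp.sum_smul_index (fun p => by simp), Finsupp.smul_sum]
      refine Finsupp.sum_congr fun p _ => ?_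
      rw [Finsupp.smul_sum]
      refine Finsupp.sum_congr fun q _ => ?_
      split_ifs <;> simp only [Finsupp.smul_single, smul_eq_mul, mul_assoc, smul_zero])
    (fun x y z => by
      unfold pmul
      rw [← Finsupp.sum_add]
      refine Finsupp.sum_congr fun p _ => ?_
      rw [Finsupp.sum_add_index' (fun q => by simp)]
      intro q c₁ c₂
      split_ifs <;> simp [mul_add])
    (fun c x y => by
      unfold pmul
      rw [Finsupp.smul_sum]
      refine Finsupp.sum_congr fun p _ => ?_
      rw [Finsupp.sum_smul_index (fun q => by simp), Finsupp.smul_sum]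
      refine Finsupp.sum_congr fun q _ => ?_
      split_ifs <;> simp only [Finsupp.smul_single, smul_eq_mul, mul_left_comm, smul_zero])

@[simp] lemma pmulBilin_apply (x y : PathAlg F V) : pmulBilin x y = pmul x y := rfl

lemma pmul_mem_supported {s : Set (PathIdx V)} {x y : PathAlg F V}
    (h : ∀ p ∈ x.support, ∀ q ∈ y.support, ∀ hpq, pcomp p q hpq ∈ s) :
    pmul x y ∈ Finsupp.supported F F s := by
  refine Submodule.finsuppSum_mem _ _ _ _ fun p hp =>
    Submodule.finsuppSum_mem _ _ _ _ fun q hq => ?_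
  split_ifs with hpq
  · exact Finsupp.single_mem_supported F _
      (h p (Finsupp.mem_support_iff.mpr hp) q (Finsupp.mem_support_iff.mpr hq) hpq)
  · exact zero_mem _

lemma mapDomain_pmul {W : Type} [Quiver.{0} W] [DecidableEq W] {f : PathIdx V → PathIdx W}
    {s : Set (PathIdx V)} (hcomp : ∀ p ∈ s, ∀ q ∈ s, (p.2.1 = q.1 ↔ (f p).2.1 = (f q).1))
    (hf : ∀ p ∈ s, ∀ q ∈ s, ∀ h h', f (pcomp p q h) = pcomp (f p) (f q) h')
    {x y : PathAlg F V} (hx : x ∈ Finsupp.supported F F s) (hy : y ∈ Finsupp.supported F F s) :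
    Finsupp.mapDomain f (pmul x y) = pmul (Finsupp.mapDomain f x) (Finsupp.mapDomain f y) := by
  rw [Finsupp.supported_eq_span_single] at hx hy
  induction hx, hy using Submodule.span_induction₂ with
  | mem_mem x y hx hy =>
    obtain ⟨p, hp, rfl⟩ := hx
    obtain ⟨q, hq, rfl⟩ := hy
    simp only [Finsupp.mapDomain_single, pmul_single_single]
    by_cases h : p.2.1 = q.1
    · rw [dif_pos h, dif_pos ((hcomp p hp q hq).mp h), Finsupp.mapDomain_single, hf p hp q hq]
    · rw [dif_neg h, dif_neg (mt (hcomp p hp q hq).mpr h), Finsupp.mapDomain_zero]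
  | zero_left => simp [← pmulBilin_apply]
  | zero_right => simp [← pmulBilin_apply]
  | add_left x y z _ _ _ hx hy =>
    simp only [← pmulBilin_apply, map_add, LinearMap.add_apply, Finsupp.mapDomain_add] at *
    rw [hx, hy]
  | add_right x y z _ _ _ hy hz =>
    simp only [← pmulBilin_apply, map_add, Finsupp.mapDomain_add] at *
    rw [hy, hz]
  | smul_left c x y _ _ h =>
    simp only [← pmulBilin_apply, map_smul, LinearMap.smul_apply, Finsupp.mapDomain_smul] at *
    rw [h]
  | smul_right c x y _ _ h =>
    simp only [← pmulBilin_apply, map_smul, Finsupp.mapDomain_smul] at *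
    rw [h]

end PathAlgebra

lemma Quiver.Path.length_cast {V : Type} [Quiver.{0} V] {a b a' b' : V} (ha : a = a')
    (hb : b = b') (p : Quiver.Path a b) : (p.cast ha hb).length = p.length := by
  subst ha hb
  rfl

section CyclicQuiver

variable {n : ℕ} [NeZero n]

instance (a b : CycV n) : Subsingleton (a ⟶ b) := ⟨fun ⟨_⟩ ⟨_⟩ => rfl⟩

def cycPathAux (i : Fin n) : (l : ℕ) → Quiver.Path (CycV.of i) (CycV.of (i + (l : Fin n)))
  | 0 => Quiver.Path.nil.cast rfl (by rw [Nat.cast_zero, add_zero])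
  | l + 1 => (cycPathAux i l).cons ⟨show i + ((l + 1 : ℕ) : Fin n) = i + (l : Fin n) + 1 by
      push_cast; ring⟩

def cycPath (i : Fin n) (l : ℕ) : PathIdx (CycV n) :=
  ⟨CycV.of i, CycV.of (i + (l : Fin n)), cycPathAux i l⟩

@[simp] lemma cycPath_length (i : Fin n) (l : ℕ) : (cycPath i l).2.2.length = l := by
  induction l with
  | zero => simp [cycPath, cycPathAux, Quiver.Path.length_cast]
  | succ l ih => simpa [cycPath, cycPathAux] using ih

lemma sigma_eq_cycPathAux {a : CycV n} : ∀ (l : ℕ) {b : CycV n} (q : Quiver.Path a b),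
    q.length = l → (⟨b, q⟩ : Σ b, Quiver.Path a b) = ⟨_, cycPathAux a.t l⟩
  | 0, _, .nil, _ => Sigma.ext (by change a.t = a.t + ((0 : ℕ) : Fin n); simp)
      (by rw [cycPathAux]; dsimp only; exact (Quiver.Path.cast_heq (U := CycV n) _ _ _).symm)
  | l + 1, c, .cons q arr, h => by
    obtain ⟨rfl, hq⟩ := Sigma.mk.inj_iff.mp (sigma_eq_cycPathAux l q (by simpa using h))
    cases eq_of_heq hq
    have hc : c = CycV.of (a.t + ((l + 1 : ℕ) : Fin n)) := by
      change c.t = a.t + ((l + 1 : ℕ) : Fin n)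
      rw [arr.down]
      change a.t + (l : Fin n) + 1 = _
      push_cast
      ring
    subst hc
    exact congrArg (Sigma.mk _) (congrArg _ (Subsingleton.elim _ _))

lemma eq_cycPath (p : PathIdx (CycV n)) : p = cycPath p.1.t p.2.2.length :=
  Sigma.ext rfl (heq_of_eq (sigma_eq_cycPathAux _ p.2.2 rfl))

lemma exists_eq_cycPath (p : PathIdx (CycV n)) : ∃ i l, p = cycPath i l :=
  ⟨_, _, eq_cycPath p⟩

lemma cycPath_inj {i j : Fin n} {l k : ℕ} : cycPath i l = cycPath j k ↔ i = j ∧ l = k := by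
  refine ⟨fun h => ⟨congrArg (fun p => p.1.t) h, ?_⟩, fun ⟨hi, hl⟩ => hi ▸ hl ▸ rfl⟩
  simpa using congrArg (fun p : PathIdx (CycV n) => p.2.2.length) h

lemma cycPath_zero (i : Fin n) : cycPath i 0 = ⟨CycV.of i, CycV.of i, .nil⟩ :=
  (eq_cycPath ⟨CycV.of i, CycV.of i, .nil⟩).symm

lemma pcomp_cycPath (i j : Fin n) (l k : ℕ) (h : (cycPath i l).2.1 = (cycPath j k).1) :
    pcomp (cycPath i l) (cycPath j k) h = cycPath i (l + k) := by
  rw [eq_cycPath (pcomp _ _ h), pcomp_length, cycPath_length, cycPath_length]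
  rfl

lemma cycPath_snd_eq_fst_iff {i j : Fin n} {l k : ℕ} :
    (cycPath i l).2.1 = (cycPath j k).1 ↔ i + (l : Fin n) = j := Iff.rfl

lemma pmul_single_cycPath {F : Type} [Field F] (i j : Fin n) (l k : ℕ) (c d : F) :
    pmul (Finsupp.single (cycPath i l) c) (Finsupp.single (cycPath j k) d) =
      if i + (l : Fin n) = j then Finsupp.single (cycPath i (l + k)) (c * d) else 0 := by
  rw [pmul_single_single]
  by_cases h : i + (l : Fin n) = j
  · rw [dif_pos (cycPath_snd_eq_fst_iff.mpr h), if_pos h, pcomp_cycPath]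
  · rw [dif_neg (mt cycPath_snd_eq_fst_iff.mp h), if_neg h]

end CyclicQuiver

section CornerIdempotent

variable {n : ℕ} [NeZero n] (M : Finset (Fin n))

noncomputable def cornerIdem (F : Type) [Field F] : PathAlg F (CycV n) :=
  ∑ i ∈ M, Finsupp.single ⟨CycV.of i, CycV.of i, .nil⟩ 1

abbrev cornerPaths : Set (PathIdx (CycV n)) := {p | p.1.t ∈ M ∧ p.2.1.t ∈ M}

lemma cycPath_mem_cornerPaths {i : Fin n} {l : ℕ} :
    cycPath i l ∈ cornerPaths M ↔ i ∈ M ∧ i + (l : Fin n) ∈ M :=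
  Iff.rfl

variable {F : Type} [Field F]

lemma pmul_cornerIdem_single (p : PathIdx (CycV n)) (c : F) :
    pmul (cornerIdem M F) (Finsupp.single p c) =
      if p.1.t ∈ M then Finsupp.single p c else 0 := by
  rw [← pmulBilin_apply, cornerIdem, map_sum, LinearMap.sum_apply]
  simp_rw [pmulBilin_apply, pmul_single_single, nil_pcomp, one_mul]
  exact Finset.sum_dite_eq' M p.1.t _

lemma pmul_single_cornerIdem (p : PathIdx (CycV n)) (c : F) :
    pmul (Finsupp.single p c) (cornerIdem M F) =
      if p.2.1.t ∈ M then Finsupp.single p c else 0 := by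
  rw [← pmulBilin_apply, cornerIdem, map_sum]
  simp_rw [pmulBilin_apply, pmul_single_single, pcomp_nil, mul_one]
  exact Finset.sum_dite_eq M p.2.1.t _

lemma pmul_cornerIdem_pmul_cornerIdem (x : PathAlg F (CycV n)) :
    pmul (cornerIdem M F) (pmul x (cornerIdem M F)) = x.filter (· ∈ cornerPaths M) := by
  induction x using Finsupp.induction_linear with
  | zero => simp [← pmulBilin_apply, Finsupp.filter_zero]
  | add x y hx hy =>
    simp only [← pmulBilin_apply, map_add, LinearMap.add_apply, Finsupp.filter_add] at *
    rw [hx, hy]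
  | single p c =>
    rw [pmul_single_cornerIdem]
    split_ifs with h₂
    · rw [pmul_cornerIdem_single]
      split_ifs with h₁
      · exact (Finsupp.filter_single_of_pos _ ⟨h₁, h₂⟩).symm
      · exact (Finsupp.filter_single_of_neg _ fun h => h₁ h.1).symm
    · rw [Finsupp.filter_single_of_neg _ fun h => h₂ h.2, ← pmulBilin_apply, map_zero]

lemma pmul_mem_supported_cornerPaths {a b : PathAlg F (CycV n)}
    (ha : a ∈ Finsupp.supported F F (cornerPaths M))
    (hb : b ∈ Finsupp.supported F F (cornerPaths M)) :
    pmul a b ∈ Finsupp.supported F F (cornerPaths M) :=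
  pmul_mem_supported fun _ hp _ hq _ => ⟨(ha hp).1, (hb hq).2⟩

lemma cornerIdem_mem_supported : cornerIdem M F ∈ Finsupp.supported F F (cornerPaths M) :=
  Submodule.sum_mem _ fun _ hi => Finsupp.single_mem_supported F _ ⟨hi, hi⟩

end CornerIdempotent

section CyclicCount

variable {n : ℕ} [NeZero n] (M : Finset (Fin n))

def cycCount (i : Fin n) (l : ℕ) : ℕ := Nat.count (fun k => i + (k : Fin n) ∈ M) l

/-- The position of `i` in the increasing enumeration of `M`. -/
def cycRank (i : Fin n) : ℕ := cycCount M 0 i.val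

lemma cycCount_add (i : Fin n) (l k : ℕ) :
    cycCount M i (l + k) = cycCount M i l + cycCount M (i + l) k := by
  simp only [cycCount, Nat.count_add, Nat.cast_add, add_assoc]

lemma cycCount_zero_self : cycCount M 0 n = M.card := by
  rw [cycCount, Nat.count_eq_card_filter_range]
  refine Finset.card_nbij' (fun k => (k : Fin n)) Fin.val ?_ ?_ ?_ ?_
  · intro k hk
    simpa using (Finset.mem_filter.mp hk).2
  · intro i hi
    simpa using hi
  · intro k hk
    exact Fin.val_cast_of_lt (by simpa using (Finset.mem_filter.mp hk).1)
  · intro i _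
    exact Fin.cast_val_eq_self i

lemma cycCount_self (i : Fin n) : cycCount M i n = M.card := by
  have h₁ := cycCount_add M 0 i.val n
  have h₂ := cycCount_add M 0 n i.val
  rw [zero_add, Fin.cast_val_eq_self] at h₁
  rw [zero_add, Fin.natCast_self, add_comm n, h₁, cycCount_zero_self] at h₂
  omega

lemma cycCount_add_mul (i : Fin n) (l q : ℕ) :
    cycCount M i (l + q * n) = cycCount M i l + q * M.card := by
  induction q with
  | zero => simp
  | succ q ih =>
    rw [add_mul, one_mul, ← add_assoc, cycCount_add, ih, cycCount_self]
    ring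

lemma cycRank_add_cycCount [NeZero M.card] (i : Fin n) (l : ℕ) :
    ((cycRank M i + cycCount M i l : ℕ) : Fin M.card) = cycRank M (i + l) := by
  have h₁ : cycRank M i + cycCount M i l = cycCount M 0 (i.val + l) := by
    rw [cycRank, cycCount_add, zero_add, Fin.cast_val_eq_self]
  have h₂ : i.val + l = (i + (l : Fin n)).val + (i.val + l) / n * n := by
    rw [Fin.val_add, Fin.val_natCast, Nat.add_mod_mod, Nat.mod_add_div']
  rw [h₁, h₂, cycCount_add_mul, cycRank]
  simp

lemma cycRank_lt {i : Fin n} (hi : i ∈ M) : cycRank M i < M.card :=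
  cycCount_zero_self M ▸ Nat.count_strict_mono (by simpa) i.isLt

lemma cycRank_lt_cycRank {i j : Fin n} (hi : i ∈ M) (h : i < j) : cycRank M i < cycRank M j :=
  Nat.count_strict_mono (by simpa) h

lemma eq_of_cycRank_eq [NeZero M.card] {i j : Fin n} (hi : i ∈ M) (hj : j ∈ M)
    (h : (cycRank M i : Fin M.card) = cycRank M j) : i = j := by
  have h' : cycRank M i = cycRank M j := by
    simpa [Fin.val_cast_of_lt (cycRank_lt M hi), Fin.val_cast_of_lt (cycRank_lt M hj)]
      using congrArg Fin.val h
  rcases lt_trichotomy i j with hij | hij | hij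
  · exact absurd h' (cycRank_lt_cycRank M hi hij).ne
  · exact hij
  · exact absurd h' (cycRank_lt_cycRank M hj hij).ne'

lemma cycCount_lt_cycCount {i : Fin n} {l l' : ℕ} (hl : i + (l : Fin n) ∈ M) (h : l < l') :
    cycCount M i l < cycCount M i l' :=
  Nat.count_strict_mono hl h

lemma card_lt_cycCount_iff {i : Fin n} (hi : i ∈ M) {l : ℕ} :
    M.card < cycCount M i l ↔ n < l := by
  rw [← cycCount_self M i]
  refine ⟨fun h => lt_of_not_ge fun hl => h.not_ge (Nat.count_monotone _ hl), fun h => ?_⟩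
  exact cycCount_lt_cycCount M (by simpa using hi) h

lemma exists_cycRank_cycCount {p : ℕ} (hp : p < M.card) (k : ℕ) :
    ∃ i ∈ M, ∃ l : ℕ, i + (l : Fin n) ∈ M ∧ cycRank M i = p ∧ cycCount M i l = k := by
  -- `i` and `i + l` are the `p`-th and `(p + k)`-th points of the preimage of `M` in `ℕ`
  set P : ℕ → Prop := fun t => 0 + (t : Fin n) ∈ M
  obtain ⟨j, hj⟩ := Finset.card_pos.mp (p.zero_le.trans_lt hp)
  have hinf : {t | P t}.Infinite := Set.infinite_of_forall_exists_gt fun a =>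
    ⟨j.val + (a + 1) * n, by simpa [P] using hj, by nlinarith [NeZero.pos n]⟩
  have hcount (q : ℕ) : cycCount M 0 (Nat.nth P q) = q := Nat.count_nth_of_infinite hinf q
  have hlt : Nat.nth P p < n := Nat.nth_lt_of_lt_count (by rwa [← cycCount, cycCount_zero_self])
  have hle : Nat.nth P p ≤ Nat.nth P (p + k) := Nat.nth_monotone hinf (by omega)
  have hmem (q : ℕ) : (Nat.nth P q : Fin n) ∈ M := by
    simpa [P] using Nat.nth_mem_of_infinite hinf q
  refine ⟨((Nat.nth P p : ℕ) : Fin n), hmem p, (Nat.nth P (p + k) - Nat.nth P p : ℕ),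
    ?_, ?_, ?_⟩
  · rw [← Nat.cast_add, Nat.add_sub_cancel' hle]
    exact hmem (p + k)
  · rw [cycRank, Fin.val_cast_of_lt hlt, hcount]
  · have h := cycCount_add M 0 (Nat.nth P p) (Nat.nth P (p + k) - Nat.nth P p)
    rw [Nat.add_sub_cancel' hle, zero_add, hcount, hcount] at h
    omega

end CyclicCount

section CornerPath

variable {n : ℕ} [NeZero n] (M : Finset (Fin n)) [NeZero M.card]

def cornerPath (p : PathIdx (CycV n)) : PathIdx (CycV M.card) :=
  cycPath (cycRank M p.1.t : Fin M.card) (cycCount M p.1.t p.2.2.length)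

lemma cornerPath_cycPath (i : Fin n) (l : ℕ) :
    cornerPath M (cycPath i l) = cycPath (cycRank M i : Fin M.card) (cycCount M i l) := by
  rw [cornerPath, cycPath_length]
  rfl

lemma cornerPath_injOn : Set.InjOn (cornerPath M) (cornerPaths M) := by
  rintro p hp q hq h
  obtain ⟨i, l, rfl⟩ := exists_eq_cycPath p
  obtain ⟨j, k, rfl⟩ := exists_eq_cycPath q
  rw [cycPath_mem_cornerPaths] at hp hq
  rw [cornerPath_cycPath, cornerPath_cycPath, cycPath_inj] at h
  obtain rfl := eq_of_cycRank_eq M hp.1 hq.1 h.1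
  refine cycPath_inj.mpr ⟨rfl, ?_⟩
  rcases lt_trichotomy l k with hlk | hlk | hlk
  · exact absurd h.2 (cycCount_lt_cycCount M hp.2 hlk).ne
  · exact hlk
  · exact absurd h.2 (cycCount_lt_cycCount M hq.2 hlk).ne'

lemma cornerPath_snd_eq_fst_iff {p q : PathIdx (CycV n)} (hp : p ∈ cornerPaths M)
    (hq : q ∈ cornerPaths M) :
    p.2.1 = q.1 ↔ (cornerPath M p).2.1 = (cornerPath M q).1 := by
  obtain ⟨i, l, rfl⟩ := exists_eq_cycPath p
  obtain ⟨j, k, rfl⟩ := exists_eq_cycPath q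
  rw [cycPath_mem_cornerPaths] at hp hq
  rw [cornerPath_cycPath, cornerPath_cycPath, cycPath_snd_eq_fst_iff, cycPath_snd_eq_fst_iff,
    ← Nat.cast_add, cycRank_add_cycCount]
  exact ⟨fun h => h ▸ rfl, eq_of_cycRank_eq M hp.2 hq.1⟩

lemma cornerPath_pcomp (p q : PathIdx (CycV n)) (h : p.2.1 = q.1)
    (h' : (cornerPath M p).2.1 = (cornerPath M q).1) :
    cornerPath M (pcomp p q h) = pcomp (cornerPath M p) (cornerPath M q) h' := by
  obtain ⟨i, l, rfl⟩ := exists_eq_cycPath p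
  obtain ⟨j, k, rfl⟩ := exists_eq_cycPath q
  obtain rfl := cycPath_snd_eq_fst_iff.mp h
  simp only [cornerPath_cycPath, pcomp_cycPath, cycCount_add]

lemma cornerPath_surjOn : Set.SurjOn (cornerPath M) (cornerPaths M) Set.univ := by
  intro q _
  obtain ⟨j, k, rfl⟩ := exists_eq_cycPath q
  obtain ⟨i, hi, l, hil, hrank, hcount⟩ := exists_cycRank_cycCount M j.isLt k
  refine ⟨cycPath i l, ⟨hi, hil⟩, ?_⟩
  rw [cornerPath_cycPath, hrank, hcount, Fin.cast_val_eq_self]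

lemma card_add_one_le_length_cornerPath_iff {p : PathIdx (CycV n)} (hp : p.1.t ∈ M) :
    M.card + 1 ≤ (cornerPath M p).2.2.length ↔ n + 1 ≤ p.2.2.length := by
  rw [cornerPath, cycPath_length, Nat.add_one_le_iff, Nat.add_one_le_iff]
  exact card_lt_cycCount_iff M hp

lemma mapDomain_cornerPath_cornerIdem (F : Type) [Field F] :
    Finsupp.mapDomain (cornerPath M) (cornerIdem M F) = pone F (CycV M.card) := by
  unfold cornerIdem pone
  rw [Finsupp.mapDomain_finsetSum]
  refine Finset.sum_nbij (fun i => (cycRank M i : Fin M.card)) (fun _ _ => Finset.mem_univ _)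
    (fun i hi j hj h => eq_of_cycRank_eq M hi hj h) (fun a _ => ?_) (fun i _ => ?_)
  · obtain ⟨i, hi, -, -, hrank, -⟩ := exists_cycRank_cycCount M a.isLt 0
    exact ⟨i, hi,
      (congrArg (fun k : ℕ => (k : Fin M.card)) hrank).trans (Fin.cast_val_eq_self a.t)⟩
  · rw [Finsupp.mapDomain_single]
    change Finsupp.single (cycPath (cycRank M i : Fin M.card) (cycCount M i 0)) 1 = _
    rw [cycCount, Nat.count_zero, cycPath_zero]
    rfl

lemma exists_mapDomain_cornerPath_eq {F : Type} [Field F] (b : PathAlg F (CycV M.card)) :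
    ∃ a ∈ Finsupp.supported F F (cornerPaths M), Finsupp.mapDomain (cornerPath M) a = b := by
  have hb : b ∈ (Finsupp.supported F F (cornerPaths M)).map
      (Finsupp.lmapDomain F F (cornerPath M)) := by
    rw [Finsupp.lmapDomain_supported, Set.eq_univ_of_univ_subset (cornerPath_surjOn M),
      Finsupp.supported_univ]
    exact Submodule.mem_top
  obtain ⟨a, ha, hab⟩ := Submodule.mem_map.mp hb
  exact ⟨a, ha, hab⟩

end CornerPath

section Presentation

variable {F : Type} [Field F] {V : Type} [Quiver.{0} V] [DecidableEq V] [Fintype V]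
  {Λ : Type} [Ring Λ] [Algebra F Λ] {π : PathAlg F V → Λ} {Rel : Set (PathAlg F V)}

def IsPresentation.toLinearMap (hπ : IsPresentation π Rel) : PathAlg F V →ₗ[F] Λ :=
  ⟨⟨π, hπ.1⟩, hπ.2.1⟩

@[simp] lemma IsPresentation.toLinearMap_apply (hπ : IsPresentation π Rel) (x : PathAlg F V) :
    hπ.toLinearMap x = π x := rfl

end Presentation

section NakayamaPresentation

variable {F : Type} [Field F] {n : ℕ} [NeZero n] {Λ : Type} [Ring Λ] [Algebra F Λ]
  {π : PathAlg F (CycV n) → Λ}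

lemma IsPresentation.map_eq_zero_iff (hπ : IsPresentation π (RelCyc F n))
    {x : PathAlg F (CycV n)} :
    π x = 0 ↔ x ∈ Finsupp.supported F F {p : PathIdx (CycV n) | n + 1 ≤ p.2.2.length} := by
  rw [hπ.2.2.2.2.2]
  constructor
  · refine fun hx => Submodule.span_le.mpr ?_ hx
    rintro _ ⟨a, b, _, ⟨r, hr, rfl⟩, rfl⟩
    have hrb : pmul (Finsupp.single r (1 : F)) b ∈
        Finsupp.supported F F {p : PathIdx (CycV n) | n + 1 ≤ p.2.2.length} :=
      pmul_mem_supported fun p hp q _ h => by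
        obtain rfl := Finset.mem_singleton.mp (Finsupp.support_single_subset hp)
        simp only [Set.mem_ofPred_eq, pcomp_length, hr]
        omega
    exact pmul_mem_supported fun p _ q hq h => by
      have := (Finsupp.mem_supported F _).mp hrb hq
      simp only [Set.mem_ofPred_eq, pcomp_length] at this ⊢
      omega
  · intro hx
    rw [Finsupp.supported_eq_span_single] at hx
    refine Submodule.span_mono ?_ hx
    rintro _ ⟨p, hp, rfl⟩
    obtain ⟨i, l, rfl⟩ := exists_eq_cycPath p
    rw [Set.mem_ofPred_eq, cycPath_length] at hp
    refine ⟨Finsupp.single (cycPath i 0) 1,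
      Finsupp.single (cycPath (i + ((n + 1 : ℕ) : Fin n)) (l - (n + 1))) 1, _,
      ⟨cycPath i (n + 1), cycPath_length .., rfl⟩, ?_⟩
    rw [pmul_single_cycPath, if_pos rfl, pmul_single_cycPath, if_pos (by simp), mul_one,
      zero_add, Nat.add_sub_cancel' hp, mul_one]

end NakayamaPresentation

section CornerOfPresentation

variable {F : Type} [Field F] {n : ℕ} [NeZero n] (M : Finset (Fin n))
  {Λ : Type} [Ring Λ] [Algebra F Λ] {π : PathAlg F (CycV n) → Λ}
  {Rel : Set (PathAlg F (CycV n))}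

lemma IsPresentation.map_cornerIdem_mul_mul (hπ : IsPresentation π Rel) (x : PathAlg F (CycV n)) :
    π (cornerIdem M F) * π x * π (cornerIdem M F) = π (x.filter (· ∈ cornerPaths M)) := by
  rw [← pmul_cornerIdem_pmul_cornerIdem, hπ.2.2.1, hπ.2.2.1, mul_assoc]

lemma IsPresentation.exists_mem_supported_cornerPaths (hπ : IsPresentation π Rel) {x : Λ}
    (hx : π (cornerIdem M F) * x * π (cornerIdem M F) = x) :
    ∃ a ∈ Finsupp.supported F F (cornerPaths M), π a = x := by
  obtain ⟨a, rfl⟩ := hπ.2.2.2.2.1 x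
  refine ⟨_, (Finsupp.mem_supported F _).mpr fun p hp => ?_,
    (hπ.map_cornerIdem_mul_mul M a).symm.trans hx⟩
  rw [Finsupp.support_filter, Finset.coe_filter] at hp
  exact hp.2

lemma IsPresentation.map_cornerIdem_mul_mul_of_mem_supported (hπ : IsPresentation π Rel)
    {a : PathAlg F (CycV n)} (ha : a ∈ Finsupp.supported F F (cornerPaths M)) :
    π (cornerIdem M F) * π a * π (cornerIdem M F) = π a := by
  rw [hπ.map_cornerIdem_mul_mul, (Finsupp.filter_eq_self_iff _ a).mpr fun p hp =>
    (Finsupp.mem_supported F a).mp ha (Finsupp.mem_support_iff.mpr hp)]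

end CornerOfPresentation

section CornerIso

variable {F : Type} [Field F] {n : ℕ} [NeZero n] (M : Finset (Fin n)) [NeZero M.card]
  {N : Type} [Ring N] [Algebra F N] {πn : PathAlg F (CycV n) → N}
  {Nm : Type} [Ring Nm] [Algebra F Nm] {πm : PathAlg F (CycV M.card) → Nm}

local notation "Corner" => {x : N // πn (cornerIdem M F) * x * πn (cornerIdem M F) = x}

noncomputable def cornerMap (hπn : IsPresentation πn (RelCyc F n))
    (πm : PathAlg F (CycV M.card) → Nm) (x : Corner) : Nm :=
  πm (Finsupp.mapDomain (cornerPath M) (hπn.exists_mem_supported_cornerPaths M x.2).choose)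

variable (hπn : IsPresentation πn (RelCyc F n)) (hπm : IsPresentation πm (RelCyc F M.card))
include hπn hπm

lemma map_mapDomain_cornerPath_eq_zero_iff {a : PathAlg F (CycV n)}
    (ha : a ∈ Finsupp.supported F F (cornerPaths M)) :
    πm (Finsupp.mapDomain (cornerPath M) a) = 0 ↔ πn a = 0 := by
  rw [Finsupp.mem_supported] at ha
  rw [hπm.map_eq_zero_iff, hπn.map_eq_zero_iff, Finsupp.mem_supported, Finsupp.mem_supported,
    Finsupp.mapDomain_support_of_injOn a ((cornerPath_injOn M).mono ha), Finset.coe_image,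
    Set.image_subset_iff]
  exact ⟨fun h p hp => (card_add_one_le_length_cornerPath_iff M (ha hp).1).mp (h hp),
    fun h p hp => (card_add_one_le_length_cornerPath_iff M (ha hp).1).mpr (h hp)⟩

lemma cornerMap_eq {x : Corner} {a : PathAlg F (CycV n)}
    (ha : a ∈ Finsupp.supported F F (cornerPaths M)) (hax : πn a = x.1) :
    cornerMap M hπn πm x = πm (Finsupp.mapDomain (cornerPath M) a) := by
  obtain ⟨hb, hbx⟩ := (hπn.exists_mem_supported_cornerPaths M x.2).choose_spec
  have h := (map_mapDomain_cornerPath_eq_zero_iff M hπn hπm (sub_mem hb ha)).mpr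
    (by rw [← hπn.toLinearMap_apply, map_sub]; simp [hbx, hax])
  rwa [Finsupp.mapDomain_sub, ← hπm.toLinearMap_apply, map_sub, sub_eq_zero] at h

lemma cornerMap_add (x y z : Corner) (hz : z.1 = x.1 + y.1) :
    cornerMap M hπn πm z = cornerMap M hπn πm x + cornerMap M hπn πm y := by
  obtain ⟨a, ha, hax⟩ := hπn.exists_mem_supported_cornerPaths M x.2
  obtain ⟨b, hb, hby⟩ := hπn.exists_mem_supported_cornerPaths M y.2
  rw [cornerMap_eq M hπn hπm ha hax, cornerMap_eq M hπn hπm hb hby,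
    cornerMap_eq M hπn hπm (add_mem ha hb) (by rw [hπn.1, hax, hby, hz]),
    Finsupp.mapDomain_add, hπm.1]

lemma cornerMap_smul (c : F) (x y : Corner) (hy : y.1 = c • x.1) :
    cornerMap M hπn πm y = c • cornerMap M hπn πm x := by
  obtain ⟨a, ha, hax⟩ := hπn.exists_mem_supported_cornerPaths M x.2
  rw [cornerMap_eq M hπn hπm ha hax,
    cornerMap_eq M hπn hπm (Submodule.smul_mem _ c ha) (by rw [hπn.2.1, hax, hy]),
    Finsupp.mapDomain_smul, hπm.2.1]

lemma cornerMap_mul (x y z : Corner) (hz : z.1 = x.1 * y.1) :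
    cornerMap M hπn πm z = cornerMap M hπn πm x * cornerMap M hπn πm y := by
  obtain ⟨a, ha, hax⟩ := hπn.exists_mem_supported_cornerPaths M x.2
  obtain ⟨b, hb, hby⟩ := hπn.exists_mem_supported_cornerPaths M y.2
  rw [cornerMap_eq M hπn hπm ha hax, cornerMap_eq M hπn hπm hb hby,
    cornerMap_eq M hπn hπm (pmul_mem_supported_cornerPaths M ha hb)
      (by rw [hπn.2.2.1, hax, hby, hz]),
    mapDomain_pmul (fun p hp q hq => cornerPath_snd_eq_fst_iff M hp hq)
      (fun p _ q _ => cornerPath_pcomp M p q) ha hb, hπm.2.2.1]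

lemma cornerMap_one (x : Corner) (hx : x.1 = πn (cornerIdem M F)) :
    cornerMap M hπn πm x = 1 := by
  rw [cornerMap_eq M hπn hπm (cornerIdem_mem_supported M) hx.symm,
    mapDomain_cornerPath_cornerIdem, hπm.2.2.2.1]

lemma cornerMap_injective : Function.Injective (cornerMap M hπn πm) := by
  intro x y hxy
  obtain ⟨a, ha, hax⟩ := hπn.exists_mem_supported_cornerPaths M x.2
  obtain ⟨b, hb, hby⟩ := hπn.exists_mem_supported_cornerPaths M y.2
  have h : πm (Finsupp.mapDomain (cornerPath M) (a - b)) = 0 := by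
    rw [Finsupp.mapDomain_sub, ← hπm.toLinearMap_apply, map_sub, hπm.toLinearMap_apply,
      hπm.toLinearMap_apply, ← cornerMap_eq M hπn hπm ha hax,
      ← cornerMap_eq M hπn hπm hb hby, hxy, sub_self]
  rw [map_mapDomain_cornerPath_eq_zero_iff M hπn hπm (sub_mem ha hb), ← hπn.toLinearMap_apply,
    map_sub, sub_eq_zero] at h
  exact Subtype.ext (hax.symm.trans (h.trans hby))

lemma cornerMap_surjective : Function.Surjective (cornerMap M hπn πm) := by
  intro y
  obtain ⟨b, rfl⟩ := hπm.2.2.2.2.1 y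
  obtain ⟨a, ha, rfl⟩ := exists_mapDomain_cornerPath_eq M b
  exact ⟨⟨πn a, hπn.map_cornerIdem_mul_mul_of_mem_supported M ha⟩,
    cornerMap_eq M hπn hπm ha rfl⟩

end CornerIso

/-- Corner algebra: for `M ⊆ {1,…,n}` of cardinality `m` and `e = Σ_{i∈M} e_i`, the corner
`e N_n e` of the symmetric Nakayama algebra `N_n` (cyclic quiver on `n` vertices modulo
paths of length `n+1`) is isomorphic to `N_m`. -/
theorem stmt_16 (F : Type) [Field F] (n m : ℕ) [NeZero n] [NeZero m]
    (N : Type) [Ring N] [Algebra F N]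
    (πn : PathAlg F (CycV n) → N) (hπn : IsPresentation πn (RelCyc F n))
    (Nm : Type) [Ring Nm] [Algebra F Nm]
    (πm : PathAlg F (CycV m) → Nm) (hπm : IsPresentation πm (RelCyc F m))
    (M : Finset (Fin n)) (hM : M.card = m)
    (e : N)
    (he : e = πn (∑ i ∈ M, Finsupp.single
        (⟨CycV.of i, CycV.of i, Quiver.Path.nil⟩ : PathIdx (CycV n)) 1)) :
    ∃ Φ : {x : N // e * x * e = x} → Nm,
      Function.Bijective Φ ∧
      (∀ x y z : {x : N // e * x * e = x}, z.val = x.val + y.val → Φ z = Φ x + Φ y) ∧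
      (∀ (c : F) (x y : {x : N // e * x * e = x}), y.val = c • x.val → Φ y = c • Φ x) ∧
      (∀ x y z : {x : N // e * x * e = x}, z.val = x.val * y.val → Φ z = Φ x * Φ y) ∧
      (∀ x : {x : N // e * x * e = x}, x.val = e → Φ x = 1) := by
  subst hM he
  exact ⟨cornerMap M hπn πm,
    ⟨cornerMap_injective M hπn hπm, cornerMap_surjective M hπn hπm⟩,
    cornerMap_add M hπn hπm, cornerMap_smul M hπn hπm, cornerMap_mul M hπn hπm,
    cornerMap_one M hπn hπm⟩
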